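/- arXiv:2207.07995 — 2 statements merged into one kernel-verified Lean document; each statement's English description precedes it below -/
import Mathlib

section
/- Let A be a residuated lattice and F, G filters of A. Then σ(F ∩ G) = σ(F) ∩ σ(G), where σ(H) = {a ∈ A | a⊥ ⋎ H = A}. -/
structure ResiduatedLattice (A : Type*) [Lattice A] [BoundedOrder A] where
  mul : A → A → A
  himp : A → A → A
  mul_comm : ∀ x y : A, mul x y = mul y x
  mul_assoc : ∀ x y z : A, mul (mul x y) z = mul x (mul y z)
  mul_top : ∀ x : A, mul x ⊤ = x
  adj : ∀ x y z : A, mul x z ≤ y ↔ z ≤ himp x y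

namespace ResiduatedLattice

variable {A : Type*} [Lattice A] [BoundedOrder A]

/-- ¬a := a → 0 -/
def neg (R : ResiduatedLattice A) (a : A) : A := R.himp a ⊥

/-- A filter: nonempty, closed under ⊙, and closed under joining with arbitrary elements. -/
def IsFilter (R : ResiduatedLattice A) (F : Set A) : Prop :=
  F.Nonempty ∧ (∀ x ∈ F, ∀ y ∈ F, R.mul x y ∈ F) ∧ (∀ x ∈ F, ∀ y : A, x ⊔ y ∈ F)

/-- Join of two filters: the filter generated by their union. -/
def FJoin (R : ResiduatedLattice A) (F G : Set A) : Set A :=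
  {c | ∃ f ∈ F, ∃ g ∈ G, R.mul f g ≤ c}

/-- Coannulet a⊥ = {x | x ∨ a = 1}. -/
def perp (R : ResiduatedLattice A) (a : A) : Set A := {x | x ⊔ a = ⊤}

/-- Powers aⁿ with a⁰ = 1 = ⊤. -/
def pow (R : ResiduatedLattice A) (a : A) : ℕ → A
  | 0 => ⊤
  | n + 1 => R.mul a (pow R a n)

/-- Filter generated by a filter F together with an element x. -/
def FGen (R : ResiduatedLattice A) (F : Set A) (x : A) : Set A :=
  {a | ∃ f ∈ F, ∃ n : ℕ, R.mul f (R.pow x n) ≤ a}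

/-- Principal filter generated by a. -/
def principal (R : ResiduatedLattice A) (a : A) : Set A :=
  {b | ∃ n : ℕ, R.pow a n ≤ b}

/-- The sink σ(F) = {a | a⊥ ⋎ F = A}. -/
def sink (R : ResiduatedLattice A) (F : Set A) : Set A :=
  {a | R.FJoin (R.perp a) F = Set.univ}

/-- Purity condition: a⊥ ⋎ F = A for every a ∈ F. -/
def PureOn (R : ResiduatedLattice A) (F : Set A) : Prop :=
  ∀ a ∈ F, R.FJoin (R.perp a) F = Set.univ

/-- Prime filter. -/
def IsPrime (R : ResiduatedLattice A) (F : Set A) : Prop :=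
  R.IsFilter F ∧ F ≠ Set.univ ∧ ∀ x y : A, x ⊔ y ∈ F → x ∈ F ∨ y ∈ F

/-- Minimal prime filter. -/
def IsMinimalPrime (R : ResiduatedLattice A) (F : Set A) : Prop :=
  R.IsPrime F ∧ ∀ G : Set A, R.IsPrime G → G ⊆ F → G = F

/-- Filter generated by an arbitrary set X. -/
def gen (R : ResiduatedLattice A) (X : Set A) : Set A :=
  {a | ∃ l : List A, (∀ x ∈ l, x ∈ X) ∧ l.foldr R.mul ⊤ ≤ a}

/-- Purely-prime filter: proper pure filter p such that F₁ ∩ F₂ = p for pure filters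
implies F₁ = p or F₂ = p. -/
def PurelyPrime (R : ResiduatedLattice A) (p : Set A) : Prop :=
  R.IsFilter p ∧ R.PureOn p ∧ p ≠ Set.univ ∧
    ∀ F₁ F₂ : Set A, R.IsFilter F₁ → R.PureOn F₁ → R.IsFilter F₂ → R.PureOn F₂ →
      F₁ ∩ F₂ = p → F₁ = p ∨ F₂ = p

/-- (H : a) = {x | x ∨ a ∈ H}. -/
def res (R : ResiduatedLattice A) (H : Set A) (a : A) : Set A :=
  {x | x ⊔ a ∈ H}

end ResiduatedLattice

open ResiduatedLattice

variable {A : Type*} [Lattice A] [BoundedOrder A]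

namespace ResiduatedLattice

lemma mul_mono_right (R : ResiduatedLattice A) {b c : A} (a : A) (h : b ≤ c) :
    R.mul a b ≤ R.mul a c := by
  rw [R.adj]
  exact le_trans h ((R.adj a (R.mul a c) c).mp le_rfl)

lemma mul_le_right (R : ResiduatedLattice A) (a b : A) : R.mul a b ≤ b := by
  calc R.mul a b = R.mul b a := R.mul_comm a b
    _ ≤ R.mul b ⊤ := R.mul_mono_right b le_top
    _ = b := R.mul_top b

lemma mul_sup (R : ResiduatedLattice A) (a b c : A) :
    R.mul a (b ⊔ c) = R.mul a b ⊔ R.mul a c := by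
  apply le_antisymm
  · rw [R.adj]
    apply sup_le
    · exact (R.adj a _ b).mp le_sup_left
    · exact (R.adj a _ c).mp le_sup_right
  · exact sup_le (R.mul_mono_right a le_sup_left) (R.mul_mono_right a le_sup_right)

end ResiduatedLattice

theorem stmt7 (R : ResiduatedLattice A) (F G : Set A)
    (hF : R.IsFilter F) (hG : R.IsFilter G) :
    R.sink (F ∩ G) = R.sink F ∩ R.sink G := by
  ext a
  constructor
  · intro ha
    constructor <;>
    · refine Set.eq_univ_of_univ_subset ?_
      rw [← ha]
      rintro c ⟨x, hx, h, hh, hle⟩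
      exact ⟨x, hx, h, by first | exact hh.1 | exact hh.2, hle⟩
  · rintro ⟨haF, haG⟩
    refine Set.eq_univ_of_forall fun c => ?_
    obtain ⟨x, hx, f, hf, hxf⟩ : c ∈ R.FJoin (R.perp a) F := haF ▸ Set.mem_univ c
    obtain ⟨y, hy, g, hg, hyg⟩ : c ∈ R.FJoin (R.perp a) G := haG ▸ Set.mem_univ c
    refine ⟨R.mul x y, ?_, f ⊔ g, ⟨hF.2.2 f hf g, by
      rw [sup_comm]; exact hG.2.2 g hg f⟩, ?_⟩
    · -- (x ⊙ y) ⊔ a = ⊤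
      have hx' : x ⊔ a = ⊤ := hx
      have hy' : y ⊔ a = ⊤ := hy
      have : (⊤ : A) ≤ R.mul x y ⊔ a := by
        calc (⊤ : A) = R.mul (x ⊔ a) (y ⊔ a) := by rw [hx', hy', R.mul_top]
          _ = R.mul (x ⊔ a) y ⊔ R.mul (x ⊔ a) a := R.mul_sup _ _ _
          _ ≤ (R.mul x y ⊔ a) ⊔ a := by
              apply sup_le_sup ?_ (R.mul_le_right _ _)
              rw [R.mul_comm, R.mul_sup]
              exact sup_le (by rw [R.mul_comm]; exact le_sup_left)
                (le_trans (R.mul_le_right _ _) le_sup_right)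
          _ = R.mul x y ⊔ a := by rw [sup_assoc, sup_idem]
      exact le_antisymm le_top this
    · rw [R.mul_sup]
      apply sup_le
      · calc R.mul (R.mul x y) f = R.mul (R.mul x f) y := by
              rw [R.mul_assoc, R.mul_assoc, R.mul_comm y f]
          _ = R.mul y (R.mul x f) := R.mul_comm _ _
          _ ≤ R.mul x f := R.mul_le_right _ _
          _ ≤ c := hxf
      · calc R.mul (R.mul x y) g = R.mul x (R.mul y g) := R.mul_assoc _ _ _
          _ ≤ R.mul y g := R.mul_le_right _ _
          _ ≤ c := hyg
end

section
/- Let A be a residuated lattice. Then F is pure, i.e. σ(F) = F, for every filter F of A if and only if for every element a, the principal filter 𝔉(a) is pure. -/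
open ResiduatedLattice

variable {A : Type*} [Lattice A] [BoundedOrder A]

/-!
σ is monotone and σ(F) ⊆ F for every filter F, since x ∨ a = 1 and x ⊙ f ≤ a give
f = f ⊙ (x ∨ a) ≤ a.
Hence if every principal filter is pure and a ∈ F, then a ∈ 𝔉(a) = σ(𝔉(a)) ⊆ σ(F).
-/

namespace ResiduatedLattice

variable (R : ResiduatedLattice A)

lemma mul_le_mul {x x' y y' : A} (hx : x ≤ x') (hy : y ≤ y') : R.mul x y ≤ R.mul x' y' := by
  have hleft : R.mul x y ≤ R.mul x' y := by
    rw [R.mul_comm x y, R.mul_comm x' y]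
    exact (R.adj y _ x).mpr (hx.trans ((R.adj y _ x').mp le_rfl))
  exact hleft.trans ((R.adj x' _ y).mpr (hy.trans ((R.adj x' _ y').mp le_rfl)))

lemma mul_le_left (x y : A) : R.mul x y ≤ x := by
  simpa only [R.mul_top] using R.mul_le_mul le_rfl (le_top : y ≤ ⊤)

lemma mul_sup_le {x y z w : A} (hy : R.mul x y ≤ w) (hz : R.mul x z ≤ w) :
    R.mul x (y ⊔ z) ≤ w :=
  (R.adj x w _).mpr (sup_le ((R.adj x w y).mp hy) ((R.adj x w z).mp hz))

lemma pow_one (a : A) : R.pow a 1 = a := R.mul_top a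

lemma pow_add (a : A) (m n : ℕ) : R.pow a (m + n) = R.mul (R.pow a m) (R.pow a n) := by
  induction m with
  | zero => rw [Nat.zero_add, pow, R.mul_comm, R.mul_top]
  | succ m ih => rw [Nat.add_right_comm, pow, pow, ih, R.mul_assoc]

lemma le_of_sup_eq_top_of_mul_le {x f a : A} (hx : x ⊔ a = ⊤) (h : R.mul x f ≤ a) : f ≤ a := by
  have hfa : R.mul f (x ⊔ a) ≤ a :=
    R.mul_sup_le (by rwa [R.mul_comm]) ((R.mul_comm f a).le.trans (R.mul_le_left a f))
  rwa [hx, R.mul_top] at hfa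

variable {R}

lemma IsFilter.mem_of_le {F : Set A} (hF : R.IsFilter F) {x y : A} (hx : x ∈ F) (hxy : x ≤ y) :
    y ∈ F := by
  simpa only [sup_eq_right.mpr hxy] using hF.2.2 x hx y

lemma IsFilter.pow_mem {F : Set A} (hF : R.IsFilter F) {a : A} (ha : a ∈ F) (n : ℕ) :
    R.pow a n ∈ F := by
  induction n with
  | zero =>
    obtain ⟨x, hx⟩ := hF.1
    exact hF.mem_of_le hx le_top
  | succ n ih => exact hF.2.1 a ha _ ih

lemma principal_subset {F : Set A} (hF : R.IsFilter F) {a : A} (ha : a ∈ F) :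
    R.principal a ⊆ F :=
  fun _ ⟨n, hn⟩ => hF.mem_of_le (hF.pow_mem ha n) hn

variable (R)

lemma mem_principal_self (a : A) : a ∈ R.principal a := ⟨1, (R.pow_one a).le⟩

lemma principal_isFilter (a : A) : R.IsFilter (R.principal a) := by
  refine ⟨⟨⊤, 0, le_rfl⟩, ?_, fun x ⟨m, hm⟩ _ => ⟨m, hm.trans le_sup_left⟩⟩
  rintro x ⟨m, hm⟩ y ⟨n, hn⟩
  exact ⟨m + n, R.pow_add a m n ▸ R.mul_le_mul hm hn⟩

lemma sink_mono {F G : Set A} (h : F ⊆ G) : R.sink F ⊆ R.sink G := by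
  intro a ha
  refine Set.eq_univ_of_univ_subset (ha ▸ ?_)
  rintro c ⟨x, hx, f, hf, hle⟩
  exact ⟨x, hx, f, h hf, hle⟩

lemma sink_subset {F : Set A} (hF : R.IsFilter F) : R.sink F ⊆ F := by
  intro a ha
  obtain ⟨x, hx, f, hf, hle⟩ : a ∈ R.FJoin (R.perp a) F := ha ▸ Set.mem_univ a
  exact hF.mem_of_le hf (R.le_of_sup_eq_top_of_mul_le hx hle)

end ResiduatedLattice

theorem stmt12 (R : ResiduatedLattice A) :
    (∀ F : Set A, R.IsFilter F → R.sink F = F) ↔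
      (∀ a : A, R.sink (R.principal a) = R.principal a) := by
  refine ⟨fun h a => h _ (R.principal_isFilter a), fun h F hF => ?_⟩
  refine (R.sink_subset hF).antisymm fun a ha => ?_
  have ha_sink : a ∈ R.sink (R.principal a) := (h a).symm ▸ R.mem_principal_self a
  exact R.sink_mono (principal_subset hF ha) ha_sink
end
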